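/- arXiv:1205.4211 — 3 statements merged into one kernel-verified Lean document; each statement's English description precedes it below -/
import Mathlib

section
/- Let K ⊆ D be compact and z, z₀ ∈ K with μ(A⁰_z) = μ(A⁰_{z₀}) = 0. Suppose L ≥ 0 satisfies |Fᵢ(t,x₁) − Fᵢ(t,x₂)| ≤ L|x₁ − x₂| for i = 1,2, all t ∈ [0,T] and x₁, x₂ ∈ K, and let M = sup{|F2(t,x)| : (t,x) ∈ [0,T] × K}. Then |f(z) − f(z₀)| ≤ 2TL|z − z₀| + 2M·(μ(A⁺_{z₀} ∩ A⁻_z) + μ(A⁻_{z₀} ∩ A⁺_z)). -/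
/-!
Off the null sets `A⁰_z ∪ A⁰_{z₀}`, at each time `t` either `sgn h(t,z) = sgn h(t,z₀)`, and the
Lipschitz bounds make the integrands differ by at most `2L|z − z₀|`, or the sign switches, and the
`F2` terms differ by at most `|F2(t,z)| + |F2(t,z₀)| ≤ 2M`. The switching times form the disjoint
union `(A⁺_{z₀} ∩ A⁻_z) ∪ (A⁻_{z₀} ∩ A⁺_z)`, so integrating over `[0,T]` gives the estimate.
-/

open Set MeasureTheory

namespace Real

theorem measurable_sign : Measurable Real.sign :=
  Measurable.ite measurableSet_Iio measurable_const
    (Measurable.ite measurableSet_Ioi measurable_const measurable_const)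

theorem norm_sign_le_one (r : ℝ) : ‖sign r‖ ≤ 1 := by
  rcases sign_apply_eq r with h | h | h <;> simp [h]

theorem sign_eq_sign_of_ne_zero {s s₀ : ℝ} (hs : s ≠ 0) (hs₀ : s₀ ≠ 0)
    (h₁ : ¬(0 < s₀ ∧ s < 0)) (h₂ : ¬(s₀ < 0 ∧ 0 < s)) : sign s = sign s₀ := by
  rcases hs.lt_or_gt with h | h <;> rcases hs₀.lt_or_gt with h₀ | h₀
  all_goals simp_all [sign_of_neg, sign_of_pos]

end Real

section

variable {E : Type*} [NormedAddCommGroup E] [NormedSpace ℝ E]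

theorem norm_sign_smul_le (s : ℝ) (b : E) : ‖Real.sign s • b‖ ≤ ‖b‖ := by
  rw [norm_smul]
  exact mul_le_of_le_one_left (norm_nonneg b) (Real.norm_sign_le_one s)

theorem norm_add_sign_smul_sub_add_sign_smul_le_of_sign_eq {s s₀ δ : ℝ} {a a₀ b b₀ : E}
    (hs : Real.sign s = Real.sign s₀) (ha : ‖a - a₀‖ ≤ δ) (hb : ‖b - b₀‖ ≤ δ) :
    ‖(a + Real.sign s • b) - (a₀ + Real.sign s₀ • b₀)‖ ≤ 2 * δ := by
  rw [add_sub_add_comm, hs, ← smul_sub]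
  linarith [norm_add_le (a - a₀) (Real.sign s₀ • (b - b₀)), norm_sign_smul_le s₀ (b - b₀)]

theorem norm_add_sign_smul_sub_add_sign_smul_le {s s₀ δ M : ℝ} {a a₀ b b₀ : E}
    (ha : ‖a - a₀‖ ≤ δ) (hb : ‖b‖ ≤ M) (hb₀ : ‖b₀‖ ≤ M) :
    ‖(a + Real.sign s • b) - (a₀ + Real.sign s₀ • b₀)‖ ≤ δ + 2 * M := by
  rw [add_sub_add_comm]
  linarith [norm_add_le (a - a₀) (Real.sign s • b - Real.sign s₀ • b₀),
    norm_sub_le (Real.sign s • b) (Real.sign s₀ • b₀), norm_sign_smul_le s b,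
    norm_sign_smul_le s₀ b₀]

variable {α : Type*} [MeasurableSpace α] {μ : Measure α}

theorem MeasureTheory.IntegrableOn.sign_smul {s : Set α} {b : α → E} {g : α → ℝ}
    (hb : IntegrableOn b s μ) (hg : Measurable g) :
    IntegrableOn (fun t => Real.sign (g t) • b t) s μ :=
  Integrable.bdd_smul hb 1 (Real.measurable_sign.comp hg).aestronglyMeasurable
    (ae_of_all _ fun t => Real.norm_sign_le_one (g t))

theorem norm_setIntegral_le_add_indicator {s S : Set α} {f : α → E} {c d : ℝ} (hs : μ s ≠ ⊤)
    (hS : MeasurableSet S) (hf : ∀ᵐ x ∂μ.restrict s, ‖f x‖ ≤ c + S.indicator (fun _ => d) x) :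
    ‖∫ x in s, f x ∂μ‖ ≤ c * μ.real s + d * μ.real (s ∩ S) := by
  have : IsFiniteMeasure (μ.restrict s) := isFiniteMeasure_restrict.mpr hs
  have hc : Integrable (fun _ => c) (μ.restrict s) := integrable_const c
  have hd : Integrable (S.indicator fun _ => d) (μ.restrict s) := (integrable_const d).indicator hS
  calc ‖∫ x in s, f x ∂μ‖ ≤ ∫ x in s, c + S.indicator (fun _ => d) x ∂μ :=
        norm_integral_le_of_norm_le (hc.add hd) hf
    _ = c * μ.real s + d * μ.real (s ∩ S) := by
      rw [integral_add hc hd, setIntegral_indicator hS, setIntegral_const, setIntegral_const,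
        smul_eq_mul, smul_eq_mul, mul_comm, mul_comm (μ.real _)]

theorem ae_restrict_not_of_measure_sep_eq_zero {s : Set α} {p : α → Prop} (hs : MeasurableSet s)
    (h : μ {x ∈ s | p x} = 0) : ∀ᵐ x ∂μ.restrict s, ¬p x :=
  (ae_restrict_iff' hs).mpr <| (measure_eq_zero_iff_ae_notMem.mp h).mono
    fun _ hx hxs hp => hx ⟨hxs, hp⟩

variable {s : Set α} {a a₀ b b₀ : α → E} {u u₀ : α → ℝ} {δ M : ℝ}

theorem ae_norm_add_sign_smul_sub_le_add_indicator (hs : MeasurableSet s)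
    (hu : μ {x ∈ s | u x = 0} = 0) (hu₀ : μ {x ∈ s | u₀ x = 0} = 0)
    (ha : ∀ x ∈ s, ‖a x - a₀ x‖ ≤ δ) (hb : ∀ x ∈ s, ‖b x - b₀ x‖ ≤ δ)
    (hbM : ∀ x ∈ s, ‖b x‖ ≤ M) (hb₀M : ∀ x ∈ s, ‖b₀ x‖ ≤ M) :
    ∀ᵐ x ∂μ.restrict s,
      ‖(a x + Real.sign (u x) • b x) - (a₀ x + Real.sign (u₀ x) • b₀ x)‖ ≤
        2 * δ + (({x ∈ s | 0 < u₀ x} ∩ {x ∈ s | u x < 0}) ∪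
          ({x ∈ s | u₀ x < 0} ∩ {x ∈ s | 0 < u x})).indicator (fun _ => 2 * M) x := by
  filter_upwards [ae_restrict_mem hs, ae_restrict_not_of_measure_sep_eq_zero hs hu,
    ae_restrict_not_of_measure_sep_eq_zero hs hu₀] with x hx hux hu₀x
  by_cases hswitch : x ∈ ({x ∈ s | 0 < u₀ x} ∩ {x ∈ s | u x < 0}) ∪
      ({x ∈ s | u₀ x < 0} ∩ {x ∈ s | 0 < u x})
  · rw [indicator_of_mem hswitch]
    linarith [norm_add_sign_smul_sub_add_sign_smul_le (s := u x) (s₀ := u₀ x) (ha x hx)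
      (hbM x hx) (hb₀M x hx), (norm_nonneg _).trans (ha x hx)]
  · rw [indicator_of_notMem hswitch, add_zero]
    refine norm_add_sign_smul_sub_add_sign_smul_le_of_sign_eq ?_ (ha x hx) (hb x hx)
    exact Real.sign_eq_sign_of_ne_zero hux hu₀x
      (fun hsw => hswitch (Or.inl ⟨⟨hx, hsw.1⟩, ⟨hx, hsw.2⟩⟩))
      (fun hsw => hswitch (Or.inr ⟨⟨hx, hsw.1⟩, ⟨hx, hsw.2⟩⟩))

theorem norm_setIntegral_add_sign_smul_sub_le (hs : MeasurableSet s) (hμs : μ s ≠ ⊤)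
    (ha_int : IntegrableOn a s μ) (ha₀_int : IntegrableOn a₀ s μ) (hb_int : IntegrableOn b s μ)
    (hb₀_int : IntegrableOn b₀ s μ) (hu_meas : Measurable u) (hu₀_meas : Measurable u₀)
    (hu : μ {x ∈ s | u x = 0} = 0) (hu₀ : μ {x ∈ s | u₀ x = 0} = 0)
    (ha : ∀ x ∈ s, ‖a x - a₀ x‖ ≤ δ) (hb : ∀ x ∈ s, ‖b x - b₀ x‖ ≤ δ)
    (hbM : ∀ x ∈ s, ‖b x‖ ≤ M) (hb₀M : ∀ x ∈ s, ‖b₀ x‖ ≤ M) :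
    ‖(∫ x in s, a x + Real.sign (u x) • b x ∂μ) - ∫ x in s, a₀ x + Real.sign (u₀ x) • b₀ x ∂μ‖ ≤
      2 * δ * μ.real s + 2 * M * (μ.real ({x ∈ s | 0 < u₀ x} ∩ {x ∈ s | u x < 0}) +
        μ.real ({x ∈ s | u₀ x < 0} ∩ {x ∈ s | 0 < u x})) := by
  set S₁ := {x ∈ s | 0 < u₀ x} ∩ {x ∈ s | u x < 0}
  set S₂ := {x ∈ s | u₀ x < 0} ∩ {x ∈ s | 0 < u x}
  have hS₁s : S₁ ⊆ s := fun _ hx => hx.1.1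
  have hS₂s : S₂ ⊆ s := fun _ hx => hx.1.1
  have hS₁ : MeasurableSet S₁ :=
    (hs.inter (measurableSet_lt measurable_const hu₀_meas)).inter
      (hs.inter (measurableSet_lt hu_meas measurable_const))
  have hS₂ : MeasurableSet S₂ :=
    (hs.inter (measurableSet_lt hu₀_meas measurable_const)).inter
      (hs.inter (measurableSet_lt measurable_const hu_meas))
  have hdisj : Disjoint S₁ S₂ := disjoint_left.mpr fun _ h₁ h₂ => (h₁.1.2.trans h₂.1.2).false
  have hf : IntegrableOn (fun x => a x + Real.sign (u x) • b x) s μ :=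
    ha_int.add (hb_int.sign_smul hu_meas)
  have hf₀ : IntegrableOn (fun x => a₀ x + Real.sign (u₀ x) • b₀ x) s μ :=
    ha₀_int.add (hb₀_int.sign_smul hu₀_meas)
  rw [← integral_sub hf hf₀, ← measureReal_union hdisj hS₂ (measure_ne_top_of_subset hS₁s hμs)
    (measure_ne_top_of_subset hS₂s hμs), ← inter_eq_right.mpr (union_subset hS₁s hS₂s)]
  exact norm_setIntegral_le_add_indicator hμs (hS₁.union hS₂)
    (ae_norm_add_sign_smul_sub_le_add_indicator hs hu hu₀ ha hb hbM hb₀M)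

end

theorem ContinuousOn.continuous_left_of_mem {α β γ : Type*} [TopologicalSpace α]
    [TopologicalSpace β] [TopologicalSpace γ] {F : α → β → γ} {D : Set β}
    (hF : ContinuousOn (fun p : α × β => F p.1 p.2) (univ ×ˢ D)) {x : β} (hx : x ∈ D) :
    Continuous fun t => F t x :=
  hF.comp_continuous (continuous_id.prodMk continuous_const) fun _ => ⟨trivial, hx⟩

theorem averaged_function_estimate_general {n : ℕ} (T : ℝ) (hT : 0 < T)
    (D : Set (EuclideanSpace ℝ (Fin n)))
    (F1 F2 : ℝ → EuclideanSpace ℝ (Fin n) → EuclideanSpace ℝ (Fin n))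
    (h : ℝ → EuclideanSpace ℝ (Fin n) → ℝ)
    (hF1c : ContinuousOn (fun p : ℝ × EuclideanSpace ℝ (Fin n) => F1 p.1 p.2) (univ ×ˢ D))
    (hF2c : ContinuousOn (fun p : ℝ × EuclideanSpace ℝ (Fin n) => F2 p.1 p.2) (univ ×ˢ D))
    (hhc : ContinuousOn (fun p : ℝ × EuclideanSpace ℝ (Fin n) => h p.1 p.2) (univ ×ˢ D))
    (K : Set (EuclideanSpace ℝ (Fin n))) (hKD : K ⊆ D)
    (z z₀ : EuclideanSpace ℝ (Fin n)) (hz : z ∈ K) (hz₀ : z₀ ∈ K)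
    (hA0z : volume {t ∈ Icc (0 : ℝ) T | h t z = 0} = 0)
    (hA0z₀ : volume {t ∈ Icc (0 : ℝ) T | h t z₀ = 0} = 0)
    (L : ℝ)
    (hlipF1 : ∀ t ∈ Icc (0 : ℝ) T, ∀ x₁ ∈ K, ∀ x₂ ∈ K, ‖F1 t x₁ - F1 t x₂‖ ≤ L * ‖x₁ - x₂‖)
    (hlipF2 : ∀ t ∈ Icc (0 : ℝ) T, ∀ x₁ ∈ K, ∀ x₂ ∈ K, ‖F2 t x₁ - F2 t x₂‖ ≤ L * ‖x₁ - x₂‖)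
    (M : ℝ)
    (hM : IsLUB {r : ℝ | ∃ t ∈ Icc (0 : ℝ) T, ∃ x ∈ K, r = ‖F2 t x‖} M) :
    ‖(∫ t in (0 : ℝ)..T, (F1 t z + Real.sign (h t z) • F2 t z)) -
        ∫ t in (0 : ℝ)..T, (F1 t z₀ + Real.sign (h t z₀) • F2 t z₀)‖
      ≤ 2 * T * L * ‖z - z₀‖ +
        2 * M * ((volume ({t ∈ Icc (0 : ℝ) T | 0 < h t z₀} ∩ {t ∈ Icc (0 : ℝ) T | h t z < 0})).toReal +
          (volume ({t ∈ Icc (0 : ℝ) T | h t z₀ < 0} ∩ {t ∈ Icc (0 : ℝ) T | 0 < h t z})).toReal) := by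
  have hint {G : ℝ → EuclideanSpace ℝ (Fin n) → EuclideanSpace ℝ (Fin n)}
      (hG : ContinuousOn (fun p : ℝ × EuclideanSpace ℝ (Fin n) => G p.1 p.2) (univ ×ˢ D))
      {x} (hx : x ∈ K) : IntegrableOn (fun t => G t x) (Icc 0 T) :=
    (hG.continuous_left_of_mem (hKD hx)).integrableOn_Icc
  have hmeas {x} (hx : x ∈ K) : Measurable fun t => h t x :=
    (hhc.continuous_left_of_mem (hKD hx)).measurable
  have hestimate := norm_setIntegral_add_sign_smul_sub_le measurableSet_Icc
    measure_Icc_lt_top.ne (hint hF1c hz) (hint hF1c hz₀) (hint hF2c hz) (hint hF2c hz₀)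
    (hmeas hz) (hmeas hz₀) hA0z hA0z₀ (fun t ht => hlipF1 t ht z hz z₀ hz₀)
    (fun t ht => hlipF2 t ht z hz z₀ hz₀) (fun t ht => hM.1 ⟨t, ht, z, hz, rfl⟩)
    (fun t ht => hM.1 ⟨t, ht, z₀, hz₀, rfl⟩)
  rw [Real.volume_real_Icc_of_le hT.le, sub_zero, measureReal_def, measureReal_def] at hestimate
  rw [intervalIntegral.integral_of_le hT.le, intervalIntegral.integral_of_le hT.le,
    ← integral_Icc_eq_integral_Ioc, ← integral_Icc_eq_integral_Ioc]
  linarith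

/-- Quantitative continuity estimate for the averaged function
`f(z) = ∫₀ᵀ (F1(t,z) + sgn(h(t,z)) • F2(t,z)) dt`:
`|f(z) − f(z₀)| ≤ 2TL|z − z₀| + 2M (μ(A⁺_{z₀} ∩ A⁻_z) + μ(A⁻_{z₀} ∩ A⁺_z))`. -/
theorem averaged_function_estimate {n : ℕ} (T : ℝ) (hT : 0 < T)
    (D : Set (EuclideanSpace ℝ (Fin n))) (hD : IsOpen D)
    (F1 F2 : ℝ → EuclideanSpace ℝ (Fin n) → EuclideanSpace ℝ (Fin n))
    (h : ℝ → EuclideanSpace ℝ (Fin n) → ℝ)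
    (hF1c : ContinuousOn (fun p : ℝ × EuclideanSpace ℝ (Fin n) => F1 p.1 p.2) (univ ×ˢ D))
    (hF2c : ContinuousOn (fun p : ℝ × EuclideanSpace ℝ (Fin n) => F2 p.1 p.2) (univ ×ˢ D))
    (hhc : ContinuousOn (fun p : ℝ × EuclideanSpace ℝ (Fin n) => h p.1 p.2) (univ ×ˢ D))
    (hF1per : ∀ t x, F1 (t + T) x = F1 t x)
    (hF2per : ∀ t x, F2 (t + T) x = F2 t x)
    (hhper : ∀ t x, h (t + T) x = h t x)
    (K : Set (EuclideanSpace ℝ (Fin n))) (hK : IsCompact K) (hKD : K ⊆ D)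
    (z z₀ : EuclideanSpace ℝ (Fin n)) (hz : z ∈ K) (hz₀ : z₀ ∈ K)
    (hA0z : volume {t ∈ Icc (0 : ℝ) T | h t z = 0} = 0)
    (hA0z₀ : volume {t ∈ Icc (0 : ℝ) T | h t z₀ = 0} = 0)
    (L : ℝ) (hL : 0 ≤ L)
    (hlipF1 : ∀ t ∈ Icc (0 : ℝ) T, ∀ x₁ ∈ K, ∀ x₂ ∈ K, ‖F1 t x₁ - F1 t x₂‖ ≤ L * ‖x₁ - x₂‖)
    (hlipF2 : ∀ t ∈ Icc (0 : ℝ) T, ∀ x₁ ∈ K, ∀ x₂ ∈ K, ‖F2 t x₁ - F2 t x₂‖ ≤ L * ‖x₁ - x₂‖)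
    (M : ℝ)
    (hM : IsLUB {r : ℝ | ∃ t ∈ Icc (0 : ℝ) T, ∃ x ∈ K, r = ‖F2 t x‖} M) :
    ‖(∫ t in (0 : ℝ)..T, (F1 t z + Real.sign (h t z) • F2 t z)) -
        ∫ t in (0 : ℝ)..T, (F1 t z₀ + Real.sign (h t z₀) • F2 t z₀)‖
      ≤ 2 * T * L * ‖z - z₀‖ +
        2 * M * ((volume ({t ∈ Icc (0 : ℝ) T | 0 < h t z₀} ∩ {t ∈ Icc (0 : ℝ) T | h t z < 0})).toReal +
          (volume ({t ∈ Icc (0 : ℝ) T | h t z₀ < 0} ∩ {t ∈ Icc (0 : ℝ) T | 0 < h t z})).toReal) :=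
  averaged_function_estimate_general T hT D F1 F2 h hF1c hF2c hhc K hKD z z₀ hz hz₀ hA0z hA0z₀ L
    hlipF1 hlipF2 M hM
end

section
/- Let Γ ⊆ D be compact such that for every z ∈ Γ the map t ↦ h(t,z) has only isolated zeros in [0,T], assume F1 and F2 are locally Lipschitz with respect to x, and suppose f(z) ≠ 0 for every z ∈ Γ. Then there exists δ₀ ∈ (0,1] such that f_δ(z) ≠ 0 for all z ∈ Γ and all δ ∈ (0,δ₀]. -/
/-!
Along `δ → 0⁺` and `z → z₀` inside `Γ`, the integrand `F1 + φ(h/δ) • F2` converges to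
`F1 + sgn h • F2` at every `t` with `h(t, z₀) ≠ 0`, since there `h/δ → ±∞` and `φ` saturates
at `±1`. The isolated zeros of `h(·, z₀)` in the compact interval `[0, T]` are finitely many, so
this is convergence almost everywhere, and dominated convergence gives `f_δ(z) → f(z₀) ≠ 0`.
A tube-lemma argument over the compact set `Γ` makes the threshold for `δ` uniform in `z₀`.
-/

open Set Filter MeasureTheory Topology Interval intervalIntegral

lemma transition_eq_max_min {φ : ℝ → ℝ}
    (hφ₁ : ∀ u : ℝ, 1 ≤ u → φ u = 1)
    (hφ₂ : ∀ u : ℝ, -1 < u → u < 1 → φ u = u)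
    (hφ₃ : ∀ u : ℝ, u ≤ -1 → φ u = -1) :
    φ = fun u => max (-1) (min 1 u) := by
  funext u
  rcases le_or_gt 1 u with h1 | h1
  · rw [hφ₁ u h1, min_eq_left h1, max_eq_right (by norm_num)]
  rcases le_or_gt u (-1) with h2 | h2
  · rw [hφ₃ u h2, min_eq_right (by linarith), max_eq_left h2]
  · rw [hφ₂ u h2 h1, min_eq_right h1.le, max_eq_right h2.le]

lemma abs_max_neg_one_min_one_le (u : ℝ) : |max (-1) (min 1 u)| ≤ 1 :=
  abs_le.2 ⟨le_max_left _ _, max_le (by norm_num) (min_le_left _ _)⟩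

lemma eventually_max_neg_one_min_one_div_eq_sign {ι : Type*} {l : Filter ι} {a ε : ι → ℝ}
    {a₀ : ℝ} (ha : Tendsto a l (𝓝 a₀)) (ha₀ : a₀ ≠ 0) (hε : Tendsto ε l (𝓝[>] 0)) :
    ∀ᶠ i in l, max (-1) (min 1 (a i / ε i)) = Real.sign a₀ := by
  have hinv : Tendsto (fun i => (ε i)⁻¹) l atTop := tendsto_inv_nhdsGT_zero.comp hε
  rcases ha₀.lt_or_gt with hneg | hpos
  · filter_upwards [(ha.neg_mul_atTop hneg hinv).eventually_le_atBot (-1)] with i hi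
    rw [Real.sign_of_neg hneg, div_eq_mul_inv, min_eq_right (by linarith), max_eq_left hi]
  · filter_upwards [(ha.pos_mul_atTop hpos hinv).eventually_ge_atTop 1] with i hi
    rw [Real.sign_of_pos hpos, div_eq_mul_inv, min_eq_left hi, max_eq_right (by norm_num)]

lemma IsCompact.finite_of_forall_isolated {X : Type*} [PseudoMetricSpace X] {S : Set X}
    (hS : IsCompact S) (hiso : ∀ x ∈ S, ∃ η > 0, ∀ y ∈ S, dist y x < η → y = x) : S.Finite := by
  choose! η hη hiso using hiso
  obtain ⟨t, htS, hcover⟩ :=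
    hS.elim_nhds_subcover (fun x => Metric.ball x (η x)) fun x hx =>
      Metric.ball_mem_nhds x (hη x hx)
  refine t.finite_toSet.subset fun y hy => ?_
  obtain ⟨x, hx, hyx⟩ := mem_iUnion₂.1 (hcover hy)
  rwa [hiso x (htS x hx) y hy hyx]

lemma ae_ne_zero_of_isolated_zeros {g : ℝ → ℝ} (hg : Continuous g) {a b : ℝ}
    (hiso : ∀ t₀ ∈ {t ∈ Icc a b | g t = 0}, ∃ η > 0,
      ∀ t ∈ {t ∈ Icc a b | g t = 0}, |t - t₀| < η → t = t₀) :
    ∀ᵐ t, t ∈ Icc a b → g t ≠ 0 := by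
  have hclosed : IsClosed {t ∈ Icc a b | g t = 0} :=
    isClosed_Icc.inter (isClosed_eq hg continuous_const)
  have hfinite : {t ∈ Icc a b | g t = 0}.Finite :=
    (isCompact_Icc.of_isClosed_subset hclosed fun t ht => ht.1).finite_of_forall_isolated
      (by simpa only [Real.dist_eq] using hiso)
  filter_upwards [measure_eq_zero_iff_ae_notMem.1 (hfinite.measure_zero volume)] with t ht htI
  exact fun h0 => ht ⟨htI, h0⟩

lemma IsCompact.eventually_forall_of_forall_eventually_nhdsWithin {X Y : Type*}
    [TopologicalSpace Y] {l : Filter X} {K : Set Y} (hK : IsCompact K) {P : X → Y → Prop}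
    (hP : ∀ y ∈ K, ∀ᶠ p in l ×ˢ 𝓝[K] y, P p.1 p.2) : ∀ᶠ x in l, ∀ y ∈ K, P x y := by
  have hprod : ∀ᶠ p in l ×ˢ 𝓝ˢ K, p.2 ∈ K → P p.1 p.2 := by
    refine hK.mem_prod_nhdsSet_of_forall fun y hy => ?_
    obtain ⟨u, hu, v, hv, huv⟩ := mem_prod_iff.1 (hP y hy)
    obtain ⟨w, hw, hwv⟩ := mem_nhdsWithin_iff_exists_mem_nhds_inter.1 hv
    exact mem_prod_iff.2 ⟨u, hu, w, hw, fun p hp hpK => huv ⟨hp.1, hwv ⟨hp.2, hpK⟩⟩⟩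
  exact hprod.curry.mono fun x hx y hy => hx.self_of_nhdsSet y hy hy

lemma tendsto_integral_max_neg_one_min_one_div {X E : Type*} [TopologicalSpace X]
    [FirstCountableTopology X] [NormedAddCommGroup E] [NormedSpace ℝ E] {D Γ : Set X}
    {F1 F2 : ℝ → X → E} {h : ℝ → X → ℝ} {a b : ℝ} {z₀ : X}
    (hF1c : ContinuousOn (fun p : ℝ × X => F1 p.1 p.2) (univ ×ˢ D))
    (hF2c : ContinuousOn (fun p : ℝ × X => F2 p.1 p.2) (univ ×ˢ D))
    (hhc : ContinuousOn (fun p : ℝ × X => h p.1 p.2) (univ ×ˢ D))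
    (hΓ : IsCompact Γ) (hΓD : Γ ⊆ D) (hz₀ : z₀ ∈ D)
    (hzeros : ∀ᵐ t, t ∈ Ι a b → h t z₀ ≠ 0) :
    Tendsto (fun p : ℝ × X => ∫ t in a..b, F1 t p.2 + max (-1) (min 1 (h t p.2 / p.1)) • F2 t p.2)
      (𝓝[>] 0 ×ˢ 𝓝[Γ] z₀) (𝓝 (∫ t in a..b, F1 t z₀ + Real.sign (h t z₀) • F2 t z₀)) := by
  have hK : IsCompact (uIcc a b ×ˢ Γ) := isCompact_uIcc.prod hΓ
  have hKD : uIcc a b ×ˢ Γ ⊆ univ ×ˢ D := prod_mono (subset_univ _) hΓD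
  obtain ⟨M1, hM1⟩ := hK.exists_bound_of_continuousOn (hF1c.mono hKD)
  obtain ⟨M2, hM2⟩ := hK.exists_bound_of_continuousOn (hF2c.mono hKD)
  have hfst : Tendsto (fun p : ℝ × X => p.1) (𝓝[>] 0 ×ˢ 𝓝[Γ] z₀) (𝓝[>] 0) := tendsto_fst
  have hsnd : Tendsto (fun p : ℝ × X => p.2) (𝓝[>] 0 ×ˢ 𝓝[Γ] z₀) (𝓝[D] z₀) :=
    tendsto_snd.mono_right (nhdsWithin_mono z₀ hΓD)
  have hmemΓ : ∀ᶠ p : ℝ × X in 𝓝[>] 0 ×ˢ 𝓝[Γ] z₀, p.2 ∈ Γ := tendsto_snd self_mem_nhdsWithin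
  refine tendsto_integral_filter_of_dominated_convergence (fun _ => M1 + M2)
    ?_ ?_ intervalIntegrable_const ?_
  · filter_upwards [hmemΓ] with p hp
    have hpD := hΓD hp
    exact ((continuousOn_univ.1 (hF1c.uncurry_right _ hpD)).add
      ((continuous_const.max (continuous_const.min
        ((continuousOn_univ.1 (hhc.uncurry_right _ hpD)).div_const _))).smul
          (continuousOn_univ.1 (hF2c.uncurry_right _ hpD)))).aestronglyMeasurable
  · filter_upwards [hmemΓ] with p hp
    refine ae_of_all _ fun t ht => ?_
    have htK : (t, p.2) ∈ uIcc a b ×ˢ Γ := ⟨uIoc_subset_uIcc ht, hp⟩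
    calc ‖F1 t p.2 + max (-1) (min 1 (h t p.2 / p.1)) • F2 t p.2‖
        ≤ ‖F1 t p.2‖ + 1 * ‖F2 t p.2‖ := by
          refine (norm_add_le _ _).trans ((add_le_add_iff_left _).2 ?_)
          rw [norm_smul, Real.norm_eq_abs]
          exact mul_le_mul_of_nonneg_right (abs_max_neg_one_min_one_le _) (norm_nonneg _)
      _ ≤ M1 + M2 := by linarith [hM1 _ htK, hM2 _ htK]
  · filter_upwards [hzeros] with t ht htI
    have hF1t := ((hF1c.uncurry_left t (mem_univ t)) z₀ hz₀).tendsto.comp hsnd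
    have hF2t := ((hF2c.uncurry_left t (mem_univ t)) z₀ hz₀).tendsto.comp hsnd
    have hht := ((hhc.uncurry_left t (mem_univ t)) z₀ hz₀).tendsto.comp hsnd
    refine (hF1t.add (hF2t.const_smul (Real.sign (h t z₀)))).congr' ?_
    filter_upwards [eventually_max_neg_one_min_one_div_eq_sign hht (ht htI) hfst] with p hp
    exact congrArg (F1 t p.2 + · • F2 t p.2) hp.symm

theorem regularized_averaged_nonvanishing_general {n : ℕ} (T : ℝ) (hT : 0 < T)
    (D : Set (EuclideanSpace ℝ (Fin n)))
    (F1 F2 : ℝ → EuclideanSpace ℝ (Fin n) → EuclideanSpace ℝ (Fin n))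
    (h : ℝ → EuclideanSpace ℝ (Fin n) → ℝ)
    (hF1c : ContinuousOn (fun p : ℝ × EuclideanSpace ℝ (Fin n) => F1 p.1 p.2) (univ ×ˢ D))
    (hF2c : ContinuousOn (fun p : ℝ × EuclideanSpace ℝ (Fin n) => F2 p.1 p.2) (univ ×ˢ D))
    (hhc : ContinuousOn (fun p : ℝ × EuclideanSpace ℝ (Fin n) => h p.1 p.2) (univ ×ˢ D))
    (φ : ℝ → ℝ)
    (hφ₁ : ∀ u : ℝ, 1 ≤ u → φ u = 1)
    (hφ₂ : ∀ u : ℝ, -1 < u → u < 1 → φ u = u)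
    (hφ₃ : ∀ u : ℝ, u ≤ -1 → φ u = -1)
    (Γ : Set (EuclideanSpace ℝ (Fin n))) (hΓ : IsCompact Γ) (hΓD : Γ ⊆ D)
    (hiso : ∀ z ∈ Γ, ∀ t₀ ∈ {t ∈ Icc (0 : ℝ) T | h t z = 0}, ∃ η > 0,
      ∀ t ∈ {t ∈ Icc (0 : ℝ) T | h t z = 0}, |t - t₀| < η → t = t₀)
    (hf : ∀ z ∈ Γ, (∫ t in (0 : ℝ)..T, (F1 t z + Real.sign (h t z) • F2 t z)) ≠ 0) :
    ∃ δ₀ ∈ Ioc (0 : ℝ) 1, ∀ z ∈ Γ, ∀ δ ∈ Ioc (0 : ℝ) δ₀,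
      (∫ t in (0 : ℝ)..T, (F1 t z + φ (h t z / δ) • F2 t z)) ≠ 0 := by
  obtain rfl := transition_eq_max_min hφ₁ hφ₂ hφ₃
  have hzeros : ∀ z ∈ Γ, ∀ᵐ t, t ∈ Ι 0 T → h t z ≠ 0 := fun z hz => by
    have hcont := continuousOn_univ.1 (hhc.uncurry_right _ (hΓD hz))
    filter_upwards [ae_ne_zero_of_isolated_zeros hcont (hiso z hz)] with t ht htI
    exact ht (Ioc_subset_Icc_self (uIoc_of_le hT.le ▸ htI))
  have hev : ∀ᶠ δ in 𝓝[>] 0, ∀ z ∈ Γ,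
      (∫ t in (0 : ℝ)..T, (F1 t z + max (-1) (min 1 (h t z / δ)) • F2 t z)) ≠ 0 :=
    hΓ.eventually_forall_of_forall_eventually_nhdsWithin fun z hz =>
      (tendsto_integral_max_neg_one_min_one_div hF1c hF2c hhc hΓ hΓD (hΓD hz)
        (hzeros z hz)).eventually_ne (hf z hz)
  obtain ⟨δ₁, hδ₁, hsub⟩ := mem_nhdsGT_iff_exists_Ioc_subset.1 hev
  exact ⟨min δ₁ 1, ⟨lt_min hδ₁ one_pos, min_le_right _ _⟩,
    fun z hz δ hδ => hsub ⟨hδ.1, hδ.2.trans (min_le_left _ _)⟩ z hz⟩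

/-- If `f` does not vanish on a compact set `Γ` on which `t ↦ h(t,z)` has only isolated zeros,
and `F1`, `F2` are locally Lipschitz in `x`, then the regularized averaged functions `f_δ`
do not vanish on `Γ` for all sufficiently small `δ > 0`. -/
theorem regularized_averaged_nonvanishing {n : ℕ} (T : ℝ) (hT : 0 < T)
    (D : Set (EuclideanSpace ℝ (Fin n))) (hD : IsOpen D)
    (F1 F2 : ℝ → EuclideanSpace ℝ (Fin n) → EuclideanSpace ℝ (Fin n))
    (h : ℝ → EuclideanSpace ℝ (Fin n) → ℝ)
    (hF1c : ContinuousOn (fun p : ℝ × EuclideanSpace ℝ (Fin n) => F1 p.1 p.2) (univ ×ˢ D))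
    (hF2c : ContinuousOn (fun p : ℝ × EuclideanSpace ℝ (Fin n) => F2 p.1 p.2) (univ ×ˢ D))
    (hhc : ContinuousOn (fun p : ℝ × EuclideanSpace ℝ (Fin n) => h p.1 p.2) (univ ×ˢ D))
    (hF1per : ∀ t x, F1 (t + T) x = F1 t x)
    (hF2per : ∀ t x, F2 (t + T) x = F2 t x)
    (hhper : ∀ t x, h (t + T) x = h t x)
    (hlipF1 : ∀ x₀ ∈ D, ∃ U ∈ nhds x₀, ∃ L : ℝ, ∀ t : ℝ, ∀ x₁ ∈ U ∩ D, ∀ x₂ ∈ U ∩ D,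
      ‖F1 t x₁ - F1 t x₂‖ ≤ L * ‖x₁ - x₂‖)
    (hlipF2 : ∀ x₀ ∈ D, ∃ U ∈ nhds x₀, ∃ L : ℝ, ∀ t : ℝ, ∀ x₁ ∈ U ∩ D, ∀ x₂ ∈ U ∩ D,
      ‖F2 t x₁ - F2 t x₂‖ ≤ L * ‖x₁ - x₂‖)
    (φ : ℝ → ℝ)
    (hφ₁ : ∀ u : ℝ, 1 ≤ u → φ u = 1)
    (hφ₂ : ∀ u : ℝ, -1 < u → u < 1 → φ u = u)
    (hφ₃ : ∀ u : ℝ, u ≤ -1 → φ u = -1)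
    (Γ : Set (EuclideanSpace ℝ (Fin n))) (hΓ : IsCompact Γ) (hΓD : Γ ⊆ D)
    (hiso : ∀ z ∈ Γ, ∀ t₀ ∈ {t ∈ Icc (0 : ℝ) T | h t z = 0}, ∃ η > 0,
      ∀ t ∈ {t ∈ Icc (0 : ℝ) T | h t z = 0}, |t - t₀| < η → t = t₀)
    (hf : ∀ z ∈ Γ, (∫ t in (0 : ℝ)..T, (F1 t z + Real.sign (h t z) • F2 t z)) ≠ 0) :
    ∃ δ₀ ∈ Ioc (0 : ℝ) 1, ∀ z ∈ Γ, ∀ δ ∈ Ioc (0 : ℝ) δ₀,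
      (∫ t in (0 : ℝ)..T, (F1 t z + φ (h t z / δ) • F2 t z)) ≠ 0 :=
  regularized_averaged_nonvanishing_general T hT D F1 F2 h hF1c hF2c hhc φ hφ₁ hφ₂ hφ₃ Γ hΓ hΓD hiso
    hf
end

section
/- Let C ⊆ D be open and bounded with compact closure contained in D. Then there exists ε₀ ∈ (0,1] such that for every ε with |ε| ≤ ε₀ and every z ∈ C there exists exactly one differentiable function x : [0,T] → D with x(0) = z satisfying x'(t) = ε·G(t, x(t)) + ε²·R(t, x(t), ε) for all t ∈ [0,T]; in particular, solutions starting in C are defined on the whole interval [0,T]. -/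
/-!
Some closed `r`-thickening `K` of the compact set `closure C` still lies in `D`. On `[0, T] × K`
the field `ε G + ε² R` is bounded by `|ε| M` and, by compactness, Lipschitz in `x` uniformly in
`t`. Once `ε₀ M T ≤ r`, Picard–Lindelöf on the ball of radius `r` about `z ∈ C` yields a solution
on the whole of `[0, T]` that never leaves `K`; uniqueness is Grönwall's inequality.
-/

open Set Metric NNReal Topology

section LipschitzOnCompact

variable {X E : Type*} [PseudoMetricSpace X] [SeminormedAddCommGroup E]

lemma LipschitzOnWith.of_dist_lt_of_norm_le {f : X → E} {s : Set X} {L : ℝ≥0} {δ M : ℝ}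
    (hδ : 0 < δ) (hM : ∀ x ∈ s, ‖f x‖ ≤ M)
    (hf : ∀ x ∈ s, ∀ y ∈ s, dist x y < δ → dist (f x) (f y) ≤ L * dist x y) :
    LipschitzOnWith (max L (2 * M / δ).toNNReal) f s := by
  refine LipschitzOnWith.of_dist_le_mul fun x hx y hy => ?_
  rcases lt_or_ge (dist x y) δ with hxy | hxy
  · exact (hf x hx y hy hxy).trans (by gcongr; exact le_max_left _ _)
  have hM0 : 0 ≤ 2 * M / δ := div_nonneg (by linarith [norm_nonneg (f x), hM x hx]) hδ.le
  calc dist (f x) (f y) ≤ ‖f x‖ + ‖f y‖ := dist_le_norm_add_norm _ _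
    _ ≤ 2 * M / δ * δ := by rw [div_mul_cancel₀ _ hδ.ne']; linarith [hM x hx, hM y hy]
    _ ≤ (2 * M / δ).toNNReal * dist x y := by rw [Real.coe_toNNReal _ hM0]; gcongr
    _ ≤ max L (2 * M / δ).toNNReal * dist x y := by gcongr; exact le_max_right _ _

lemma IsCompact.exists_forall_lipschitzOnWith {ι : Type*} {F : ι → X → E} {S : Set ι}
    {K : Set X} {M : ℝ} (hK : IsCompact K) (hM : ∀ i ∈ S, ∀ x ∈ K, ‖F i x‖ ≤ M)
    (hloc : ∀ x ∈ K, ∃ U ∈ 𝓝 x, ∃ L : ℝ≥0, ∀ i ∈ S, LipschitzOnWith L (F i) U) :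
    ∃ L : ℝ≥0, ∀ i ∈ S, LipschitzOnWith L (F i) K := by
  choose! U hU L hL using hloc
  obtain ⟨t, htK, hKt⟩ := hK.elim_nhds_subcover (fun x => interior (U x))
    fun x hx => interior_mem_nhds.2 (hU x hx)
  obtain ⟨δ, hδ, hball⟩ := lebesgue_number_lemma_of_metric (c := fun x : t => interior (U x)) hK
    (fun _ => isOpen_interior) (by simpa only [iUnion_subtype] using hKt)
  refine ⟨_, fun i hi => LipschitzOnWith.of_dist_lt_of_norm_le (L := t.sup L) hδ (hM i hi)
    fun x hx y hy hxy => ?_⟩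
  obtain ⟨⟨z, hz⟩, hxz⟩ := hball x hx
  have hUz : ball x δ ⊆ U z := hxz.trans interior_subset
  calc dist (F i x) (F i y) ≤ L z * dist x y :=
        (hL z (htK z hz) i hi).dist_le_mul x (hUz (mem_ball_self hδ)) y (hUz (mem_ball'.2 hxy))
    _ ≤ t.sup L * dist x y := by gcongr; exact Finset.le_sup hz

end LipschitzOnCompact

section ODE

variable {E : Type*} [NormedAddCommGroup E] [NormedSpace ℝ E]

theorem IsPicardLindelof.exists_eq_forall_mem_Icc_hasDerivWithinAt_mem_closedBall
    [CompleteSpace E] {v : ℝ → E → E} {tMin tMax : ℝ} {t₀ : Icc tMin tMax} {x₀ x : E}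
    {a r L K : ℝ≥0} (hv : IsPicardLindelof v t₀ x₀ a r L K) (hx : x ∈ closedBall x₀ r) :
    ∃ f : ℝ → E, f t₀ = x ∧ ∀ t ∈ Icc tMin tMax, f t ∈ closedBall x₀ a ∧
      HasDerivWithinAt f (v t (f t)) (Icc tMin tMax) t := by
  obtain ⟨α, hα⟩ := ODE.FunSpace.exists_isFixedPt_next hv hx
  refine ⟨α.compProj, by rw [ODE.FunSpace.compProj_val, ← hα, ODE.FunSpace.next_apply₀],
    fun t ht => ⟨α.compProj_mem_closedBall hv.mul_max_le, ?_⟩⟩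
  refine ODE.hasDerivWithinAt_picard_Icc t₀.2 hv.continuousOn_uncurry
    α.continuous_compProj.continuousOn (fun _ _ => α.compProj_mem_closedBall hv.mul_max_le)
    x ht |>.congr_of_mem (fun t' ht' => ?_) ht
  nth_rw 1 [← hα]
  rw [ODE.FunSpace.compProj_of_mem ht', ODE.FunSpace.next_apply]

theorem exists_forall_mem_Icc_hasDerivWithinAt_mem_closedBall [CompleteSpace E]
    {v : ℝ → E → E} {T r M : ℝ} {L : ℝ≥0} {x₀ : E} (hT : 0 ≤ T) (hr : 0 ≤ r)
    (hlip : ∀ t ∈ Icc 0 T, LipschitzOnWith L (v t) (closedBall x₀ r))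
    (hcont : ∀ x ∈ closedBall x₀ r, ContinuousOn (v · x) (Icc 0 T))
    (hM : ∀ t ∈ Icc 0 T, ∀ x ∈ closedBall x₀ r, ‖v t x‖ ≤ M) (hMr : M * T ≤ r) :
    ∃ f : ℝ → E, f 0 = x₀ ∧ ∀ t ∈ Icc 0 T, f t ∈ closedBall x₀ r ∧
      HasDerivWithinAt f (v t (f t)) (Icc 0 T) t := by
  have hM0 : 0 ≤ M := (norm_nonneg _).trans (hM 0 ⟨le_rfl, hT⟩ x₀ (mem_closedBall_self hr))
  have hv : IsPicardLindelof v (t₀ := ⟨0, le_rfl, hT⟩) x₀ ⟨r, hr⟩ 0 ⟨M, hM0⟩ L :=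
    { lipschitzOnWith := hlip
      continuousOn := hcont
      norm_le := hM
      mul_max_le := by
        change M * max (T - 0) (0 - 0) ≤ r - 0
        simpa [max_eq_left hT] using hMr }
  exact hv.exists_eq_forall_mem_Icc_hasDerivWithinAt_mem_closedBall (mem_closedBall_self le_rfl)

/-- Both solutions run in the compact set swept out by the two trajectories, on which the field
is bounded and hence uniformly Lipschitz. -/
theorem ODE_solution_unique_of_locallyLipschitz_Icc {v : ℝ → E → E} {D : Set E} {a b : ℝ}
    (hv : ContinuousOn (fun p : ℝ × E => v p.1 p.2) (Icc a b ×ˢ D))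
    (hlip : ∀ x ∈ D, ∃ U ∈ 𝓝 x, ∃ L : ℝ≥0, ∀ t ∈ Icc a b, LipschitzOnWith L (v t) U)
    {f g : ℝ → E} (hf : ∀ t ∈ Icc a b, f t ∈ D ∧ HasDerivWithinAt f (v t (f t)) (Icc a b) t)
    (hg : ∀ t ∈ Icc a b, g t ∈ D ∧ HasDerivWithinAt g (v t (g t)) (Icc a b) t)
    (ha : f a = g a) :
    EqOn f g (Icc a b) := by
  have hfc : ContinuousOn f (Icc a b) := fun t ht => (hf t ht).2.continuousWithinAt
  have hgc : ContinuousOn g (Icc a b) := fun t ht => (hg t ht).2.continuousWithinAt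
  set K := f '' Icc a b ∪ g '' Icc a b
  have hK : IsCompact K :=
    (isCompact_Icc.image_of_continuousOn hfc).union (isCompact_Icc.image_of_continuousOn hgc)
  have hKD : K ⊆ D := by
    rintro _ (⟨t, ht, rfl⟩ | ⟨t, ht, rfl⟩)
    exacts [(hf t ht).1, (hg t ht).1]
  obtain ⟨M, hM⟩ := (isCompact_Icc.prod hK).exists_bound_of_continuousOn
    (hv.mono (prod_mono subset_rfl hKD))
  obtain ⟨L, hL⟩ := hK.exists_forall_lipschitzOnWith (fun t ht x hx => hM (t, x) ⟨ht, hx⟩)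
    fun x hx => hlip x (hKD hx)
  refine ODE_solution_unique_of_mem_Icc_right (s := fun _ => K)
    (fun t ht => hL t (Ico_subset_Icc_self ht)) hfc ?_
    (fun t ht => Or.inl (mem_image_of_mem f (Ico_subset_Icc_self ht))) hgc ?_
    (fun t ht => Or.inr (mem_image_of_mem g (Ico_subset_Icc_self ht))) ha
  · exact fun t ht => (hf t (Ico_subset_Icc_self ht)).2.mono_of_mem_nhdsWithin
      (Icc_mem_nhdsGE_of_mem ht)
  · exact fun t ht => (hg t (Ico_subset_Icc_self ht)).2.mono_of_mem_nhdsWithin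
      (Icc_mem_nhdsGE_of_mem ht)

end ODE

section PerturbedField

variable {E : Type*} [NormedAddCommGroup E] [NormedSpace ℝ E]
  {G : ℝ → E → E} {R : ℝ → E → ℝ → E} {D : Set E} {ε : ℝ}

def perturbedField (G : ℝ → E → E) (R : ℝ → E → ℝ → E) (ε t : ℝ) (x : E) : E :=
  ε • G t x + ε ^ 2 • R t x ε

lemma norm_smul_add_sq_smul_le (hε : |ε| ≤ 1) (u w : E) :
    ‖ε • u + ε ^ 2 • w‖ ≤ |ε| * (‖u‖ + ‖w‖) := by
  have hsq : |ε| ^ 2 ≤ |ε| := pow_le_of_le_one (abs_nonneg ε) hε two_ne_zero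
  calc ‖ε • u + ε ^ 2 • w‖ ≤ |ε| * ‖u‖ + |ε| ^ 2 * ‖w‖ := 
        (norm_add_le _ _).trans_eq (by rw [norm_smul, norm_smul, norm_pow, Real.norm_eq_abs])
    _ ≤ |ε| * ‖u‖ + |ε| * ‖w‖ := by gcongr
    _ = |ε| * (‖u‖ + ‖w‖) := by ring

lemma continuousOn_perturbedField
    (hGc : ContinuousOn (fun p : ℝ × E => G p.1 p.2) (univ ×ˢ D))
    (hRc : ContinuousOn (fun p : ℝ × E × ℝ => R p.1 p.2.1 p.2.2) (univ ×ˢ D ×ˢ Icc (-1 : ℝ) 1))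
    (hε : ε ∈ Icc (-1 : ℝ) 1) :
    ContinuousOn (fun p : ℝ × E => perturbedField G R ε p.1 p.2) (univ ×ˢ D) := by
  have hRε : ContinuousOn (fun p : ℝ × E => R p.1 p.2 ε) (univ ×ˢ D) :=
    hRc.comp (continuous_fst.prodMk (continuous_snd.prodMk continuous_const)).continuousOn
      fun p hp => ⟨trivial, hp.2, hε⟩
  exact (hGc.const_smul ε).add (hRε.const_smul (ε ^ 2))

lemma perturbedField_locallyLipschitz (hD : IsOpen D)
    (hGlip : ∀ x₀ ∈ D, ∃ U ∈ 𝓝 x₀, ∃ L : ℝ, ∀ t : ℝ, ∀ x₁ ∈ U ∩ D, ∀ x₂ ∈ U ∩ D,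
      ‖G t x₁ - G t x₂‖ ≤ L * ‖x₁ - x₂‖)
    (hRlip : ∀ x₀ ∈ D, ∃ U ∈ 𝓝 x₀, ∃ L : ℝ, ∀ t : ℝ, ∀ ε ∈ Icc (-1 : ℝ) 1,
      ∀ x₁ ∈ U ∩ D, ∀ x₂ ∈ U ∩ D, ‖R t x₁ ε - R t x₂ ε‖ ≤ L * ‖x₁ - x₂‖)
    (hε : ε ∈ Icc (-1 : ℝ) 1) :
    ∀ x ∈ D, ∃ U ∈ 𝓝 x, ∃ L : ℝ≥0, ∀ t, LipschitzOnWith L (perturbedField G R ε t) U := by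
  intro x hx
  obtain ⟨U₁, hU₁, L₁, hL₁⟩ := hGlip x hx
  obtain ⟨U₂, hU₂, L₂, hL₂⟩ := hRlip x hx
  refine ⟨U₁ ∩ U₂ ∩ D, Filter.inter_mem (Filter.inter_mem hU₁ hU₂) (hD.mem_nhds hx),
    (L₁ + L₂).toNNReal, fun t => LipschitzOnWith.of_dist_le' fun y hy z hz => ?_⟩
  have hG := hL₁ t y ⟨hy.1.1, hy.2⟩ z ⟨hz.1.1, hz.2⟩
  have hR := hL₂ t ε hε y ⟨hy.1.2, hy.2⟩ z ⟨hz.1.2, hz.2⟩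
  rw [dist_eq_norm, dist_eq_norm]
  calc ‖perturbedField G R ε t y - perturbedField G R ε t z‖
      = ‖ε • (G t y - G t z) + ε ^ 2 • (R t y ε - R t z ε)‖ := by
        simp only [perturbedField, smul_sub]; abel_nf
    _ ≤ |ε| * (‖G t y - G t z‖ + ‖R t y ε - R t z ε‖) := norm_smul_add_sq_smul_le (abs_le.2 hε) _ _
    _ ≤ 1 * (L₁ * ‖y - z‖ + L₂ * ‖y - z‖) := by gcongr; exact abs_le.2 hε
    _ = (L₁ + L₂) * ‖y - z‖ := by ring

lemma exists_norm_perturbedField_le {a b : ℝ} {K : Set E} (hK : IsCompact K) (hKD : K ⊆ D)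
    (hGc : ContinuousOn (fun p : ℝ × E => G p.1 p.2) (univ ×ˢ D))
    (hRc : ContinuousOn (fun p : ℝ × E × ℝ => R p.1 p.2.1 p.2.2) (univ ×ˢ D ×ˢ Icc (-1 : ℝ) 1)) :
    ∃ M, 0 ≤ M ∧ ∀ ε ∈ Icc (-1 : ℝ) 1, ∀ t ∈ Icc a b, ∀ x ∈ K,
      ‖perturbedField G R ε t x‖ ≤ |ε| * M := by
  obtain ⟨MG, hMG⟩ := (isCompact_Icc.prod hK).exists_bound_of_continuousOn
    (hGc.mono (prod_mono (subset_univ _) hKD))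
  obtain ⟨MR, hMR⟩ := (isCompact_Icc.prod (hK.prod isCompact_Icc)).exists_bound_of_continuousOn
    (hRc.mono (prod_mono (subset_univ _) (prod_mono hKD subset_rfl)))
  refine ⟨max 0 (MG + MR), le_max_left _ _, fun ε hε t ht x hx => ?_⟩
  calc ‖perturbedField G R ε t x‖ ≤ |ε| * (‖G t x‖ + ‖R t x ε‖) :=
        norm_smul_add_sq_smul_le (abs_le.2 hε) _ _
    _ ≤ |ε| * max 0 (MG + MR) := by
        gcongr
        exact le_max_of_le_right (add_le_add (hMG (t, x) ⟨ht, hx⟩) (hMR (t, x, ε) ⟨ht, hx, hε⟩))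

end PerturbedField

theorem existence_uniqueness_on_interval_general {n : ℕ} (T : ℝ) (hT : 0 < T)
    (D : Set (EuclideanSpace ℝ (Fin n))) (hD : IsOpen D)
    (G : ℝ → EuclideanSpace ℝ (Fin n) → EuclideanSpace ℝ (Fin n))
    (R : ℝ → EuclideanSpace ℝ (Fin n) → ℝ → EuclideanSpace ℝ (Fin n))
    (hGc : ContinuousOn (fun p : ℝ × EuclideanSpace ℝ (Fin n) => G p.1 p.2) (univ ×ˢ D))
    (hRc : ContinuousOn (fun p : ℝ × EuclideanSpace ℝ (Fin n) × ℝ => R p.1 p.2.1 p.2.2)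
      (univ ×ˢ D ×ˢ Icc (-1 : ℝ) 1))
    (hGlip : ∀ x₀ ∈ D, ∃ U ∈ nhds x₀, ∃ L : ℝ, ∀ t : ℝ, ∀ x₁ ∈ U ∩ D, ∀ x₂ ∈ U ∩ D,
      ‖G t x₁ - G t x₂‖ ≤ L * ‖x₁ - x₂‖)
    (hRlip : ∀ x₀ ∈ D, ∃ U ∈ nhds x₀, ∃ L : ℝ, ∀ t : ℝ, ∀ ε ∈ Icc (-1 : ℝ) 1,
      ∀ x₁ ∈ U ∩ D, ∀ x₂ ∈ U ∩ D, ‖R t x₁ ε - R t x₂ ε‖ ≤ L * ‖x₁ - x₂‖)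
    (C : Set (EuclideanSpace ℝ (Fin n)))
    (hCbdd : Bornology.IsBounded C) (hCcl : closure C ⊆ D) :
    ∃ ε₀ ∈ Ioc (0 : ℝ) 1, ∀ ε : ℝ, |ε| ≤ ε₀ → ∀ z ∈ C,
      ∃ x : ℝ → EuclideanSpace ℝ (Fin n),
        ((∀ t ∈ Icc (0 : ℝ) T, x t ∈ D) ∧ x 0 = z ∧
          ∀ t ∈ Icc (0 : ℝ) T,
            HasDerivWithinAt x (ε • G t (x t) + ε ^ 2 • R t (x t) ε) (Icc (0 : ℝ) T) t) ∧
        ∀ y : ℝ → EuclideanSpace ℝ (Fin n),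
          ((∀ t ∈ Icc (0 : ℝ) T, y t ∈ D) ∧ y 0 = z ∧
            ∀ t ∈ Icc (0 : ℝ) T,
              HasDerivWithinAt y (ε • G t (y t) + ε ^ 2 • R t (y t) ε) (Icc (0 : ℝ) T) t) →
          EqOn x y (Icc (0 : ℝ) T) := by
  obtain ⟨r, hr, hrD⟩ := hCbdd.isCompact_closure.exists_cthickening_subset_open hD hCcl
  have hK := hCbdd.isCompact_closure.cthickening (r := r)
  obtain ⟨M, hM0, hM⟩ := exists_norm_perturbedField_le (a := 0) (b := T) hK hrD hGc hRc
  set ε₀ := min 1 (r / (M * T + 1))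
  have hε₀r : ε₀ * M * T ≤ r := by
    have := (le_div_iff₀ (by positivity)).1 (min_le_right 1 (r / (M * T + 1)))
    nlinarith [(by positivity : 0 ≤ ε₀)]
  refine ⟨ε₀, ⟨by positivity, min_le_left _ _⟩, fun ε hε z hz => ?_⟩
  have hεI : ε ∈ Icc (-1 : ℝ) 1 := abs_le.1 (hε.trans (min_le_left _ _))
  have hcont := continuousOn_perturbedField hGc hRc hεI
  have hlip : ∀ x ∈ D, ∃ U ∈ 𝓝 x, ∃ L : ℝ≥0, ∀ t ∈ Icc 0 T,
      LipschitzOnWith L (perturbedField G R ε t) U := fun x hx =>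
    (perturbedField_locallyLipschitz hD hGlip hRlip hεI x hx).imp
      fun _ ⟨hU, L, hL⟩ => ⟨hU, L, fun t _ => hL t⟩
  have hMε : ∀ t ∈ Icc 0 T, ∀ x ∈ cthickening r (closure C),
      ‖perturbedField G R ε t x‖ ≤ ε₀ * M :=
    fun t ht x hx => (hM ε hεI t ht x hx).trans (by gcongr)
  obtain ⟨L, hL⟩ := hK.exists_forall_lipschitzOnWith hMε fun x hx => hlip x (hrD hx)
  have hball : closedBall z r ⊆ cthickening r (closure C) :=
    closedBall_subset_cthickening (subset_closure hz) r
  obtain ⟨x, hx0, hx⟩ := exists_forall_mem_Icc_hasDerivWithinAt_mem_closedBall hT.le hr.le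
    (fun t ht => (hL t ht).mono hball)
    (fun y hy => hcont.comp (Continuous.prodMk_left y).continuousOn
      fun _ _ => ⟨trivial, hrD (hball hy)⟩)
    (fun t ht y hy => hMε t ht y (hball hy)) hε₀r
  refine ⟨x, ⟨fun t ht => hrD (hball (hx t ht).1), hx0, fun t ht => (hx t ht).2⟩,
    fun y ⟨hyD, hy0, hy⟩ => ?_⟩
  exact ODE_solution_unique_of_locallyLipschitz_Icc
    (hcont.mono (prod_mono (subset_univ _) subset_rfl)) hlip (fun t ht => ⟨hrD (hball (hx t ht).1), (hx t ht).2⟩) (fun t ht => ⟨hyD t ht, hy t ht⟩)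
    (hx0.trans hy0.symm)

/-- For `|ε|` sufficiently small, every initial condition `z` in an open bounded set `C` with
compact closure contained in `D` gives rise to exactly one solution of
`x' = ε G(t,x) + ε² R(t,x,ε)` defined on the whole interval `[0,T]` with values in `D`. -/
theorem existence_uniqueness_on_interval {n : ℕ} (T : ℝ) (hT : 0 < T)
    (D : Set (EuclideanSpace ℝ (Fin n))) (hD : IsOpen D)
    (G : ℝ → EuclideanSpace ℝ (Fin n) → EuclideanSpace ℝ (Fin n))
    (R : ℝ → EuclideanSpace ℝ (Fin n) → ℝ → EuclideanSpace ℝ (Fin n))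
    (hGc : ContinuousOn (fun p : ℝ × EuclideanSpace ℝ (Fin n) => G p.1 p.2) (univ ×ˢ D))
    (hRc : ContinuousOn (fun p : ℝ × EuclideanSpace ℝ (Fin n) × ℝ => R p.1 p.2.1 p.2.2)
      (univ ×ˢ D ×ˢ Icc (-1 : ℝ) 1))
    (hGper : ∀ t x, G (t + T) x = G t x)
    (hRper : ∀ t x ε, R (t + T) x ε = R t x ε)
    (hGlip : ∀ x₀ ∈ D, ∃ U ∈ nhds x₀, ∃ L : ℝ, ∀ t : ℝ, ∀ x₁ ∈ U ∩ D, ∀ x₂ ∈ U ∩ D,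
      ‖G t x₁ - G t x₂‖ ≤ L * ‖x₁ - x₂‖)
    (hRlip : ∀ x₀ ∈ D, ∃ U ∈ nhds x₀, ∃ L : ℝ, ∀ t : ℝ, ∀ ε ∈ Icc (-1 : ℝ) 1,
      ∀ x₁ ∈ U ∩ D, ∀ x₂ ∈ U ∩ D, ‖R t x₁ ε - R t x₂ ε‖ ≤ L * ‖x₁ - x₂‖)
    (C : Set (EuclideanSpace ℝ (Fin n))) (hCopen : IsOpen C)
    (hCbdd : Bornology.IsBounded C) (hCcl : closure C ⊆ D) :
    ∃ ε₀ ∈ Ioc (0 : ℝ) 1, ∀ ε : ℝ, |ε| ≤ ε₀ → ∀ z ∈ C,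
      ∃ x : ℝ → EuclideanSpace ℝ (Fin n),
        ((∀ t ∈ Icc (0 : ℝ) T, x t ∈ D) ∧ x 0 = z ∧
          ∀ t ∈ Icc (0 : ℝ) T,
            HasDerivWithinAt x (ε • G t (x t) + ε ^ 2 • R t (x t) ε) (Icc (0 : ℝ) T) t) ∧
        ∀ y : ℝ → EuclideanSpace ℝ (Fin n),
          ((∀ t ∈ Icc (0 : ℝ) T, y t ∈ D) ∧ y 0 = z ∧
            ∀ t ∈ Icc (0 : ℝ) T,
              HasDerivWithinAt y (ε • G t (y t) + ε ^ 2 • R t (y t) ε) (Icc (0 : ℝ) T) t) →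
          EqOn x y (Icc (0 : ℝ) T) :=
  existence_uniqueness_on_interval_general T hT D hD G R hGc hRc hGlip hRlip C hCbdd hCcl
end
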